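/- If a rewrite relation →_R (generated by closing a set of rules under substitution and context) is generated from rules whose left-hand sides are first-order algebraic terms, and →_R is locally confluent on the algebraic fragment, then the union →_R ∪ →_β is locally confluent on all lambda terms. -/

import Mathlib

/-- Lambda terms (de Bruijn) extended with function symbols applied to a list
of arguments. -/
inductive Tm (F : Type) : Type
  | var : ℕ → Tm F
  | lam : Tm F → Tm F
  | app : Tm F → Tm F → Tm F
  | sym : F → List (Tm F) → Tm F

namespace Tm

variable {F : Type}

/-- Renaming of de Bruijn variables. -/
def rename : (ℕ → ℕ) → Tm F → Tm F
  | ρ, .var n => .var (ρ n)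
  | ρ, .lam t => .lam (rename (fun n => Nat.casesOn n 0 (fun m => ρ m + 1)) t)
  | ρ, .app t u => .app (rename ρ t) (rename ρ u)
  | ρ, .sym f ts => .sym f (ts.attach.map fun x => rename ρ x.1)
termination_by ρ t => sizeOf t
decreasing_by
  all_goals simp_wf
  all_goals try omega
  all_goals (have := List.sizeOf_lt_of_mem x.2; omega)

/-- Lifting of a substitution under a binder. -/
def up (σ : ℕ → Tm F) : ℕ → Tm F :=
  fun n => Nat.casesOn n (.var 0) (fun m => rename Nat.succ (σ m))

/-- Capture-avoiding (de Bruijn) substitution. -/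
def subst : (ℕ → Tm F) → Tm F → Tm F
  | σ, .var n => σ n
  | σ, .lam t => .lam (subst (up σ) t)
  | σ, .app t u => .app (subst σ t) (subst σ u)
  | σ, .sym f ts => .sym f (ts.attach.map fun x => subst σ x.1)
termination_by σ t => sizeOf t
decreasing_by
  all_goals simp_wf
  all_goals try omega
  all_goals (have := List.sizeOf_lt_of_mem x.2; omega)

/-- Algebraic (first-order) terms: variables and symbol applications only. -/
inductive Alg : Tm F → Prop
  | var (n : ℕ) : Alg (.var n)
  | sym (f : F) (ts : List (Tm F)) : (∀ t ∈ ts, Alg t) → Alg (.sym f ts)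

/-- `FVar n t`: the de Bruijn variable `n` occurs free in `t`. -/
inductive FVar : ℕ → Tm F → Prop
  | var (n : ℕ) : FVar n (.var n)
  | lam {n : ℕ} {t : Tm F} : FVar (n + 1) t → FVar n (.lam t)
  | appL {n : ℕ} {t u : Tm F} : FVar n t → FVar n (.app t u)
  | appR {n : ℕ} {t u : Tm F} : FVar n u → FVar n (.app t u)
  | sym {n : ℕ} {f : F} {ts : List (Tm F)} {t : Tm F} :
      t ∈ ts → FVar n t → FVar n (.sym f ts)

/-- Closure of a relation by context. -/
inductive Ctx (base : Tm F → Tm F → Prop) : Tm F → Tm F → Prop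
  | base {t u : Tm F} : base t u → Ctx base t u
  | lam {t t' : Tm F} : Ctx base t t' → Ctx base (.lam t) (.lam t')
  | appL {t t' u : Tm F} : Ctx base t t' → Ctx base (.app t u) (.app t' u)
  | appR {t u u' : Tm F} : Ctx base u u' → Ctx base (.app t u) (.app t u')
  | sym {f : F} {l r : List (Tm F)} {t t' : Tm F} :
      Ctx base t t' → Ctx base (.sym f (l ++ t :: r)) (.sym f (l ++ t' :: r))

/-- Substitution replacing variable 0 by `b`. -/
def beta0 (b : Tm F) : ℕ → Tm F :=
  fun n => Nat.casesOn n b (fun m => .var m)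

/-- Root beta steps. -/
def BetaBase (t u : Tm F) : Prop :=
  ∃ a b : Tm F, t = .app (.lam a) b ∧ u = subst (beta0 b) a

/-- Root rewrite steps: instances of the rules by substitution. -/
def RBase (Rules : Set (Tm F × Tm F)) (t u : Tm F) : Prop :=
  ∃ p ∈ Rules, ∃ σ : ℕ → Tm F, t = subst σ p.1 ∧ u = subst σ p.2

end Tm

/-!
Let `lσ → rσ` be a root `R`-step. Since `l` is algebraic, any other step from `lσ` either takes
place inside `σ`, and the peak closes by rewriting `σ` in `rσ` and in the remaining copies in `lσ`,
or its redex is symbol-headed and reached from the root through symbols only. In the latter case it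
is an `R`-step, and both steps are steps of the algebraic cap of `lσ`, obtained by replacing each
subterm that is not headed by a symbol with a variable, chosen injectively on the finitely many
subterms. Because equal subterms get equal variables, the cap commutes with instantiating algebraic
patterns, even non-linear ones. Local confluence on algebraic terms joins the two steps on the cap,
and substituting the subterms back joins the original peak, since every variable of `r` occurs in
`l` and so stands for a subterm of `lσ`. A non-variable algebraic left-hand side matches neither an
abstraction nor a β-redex, so the remaining root peaks are the usual β-peaks, and peaks below the
root are handled structurally.
-/

theorem List.append_cons_eq_append_cons {α : Type*} {l₁ r₁ l₂ r₂ : List α} {a b : α}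
    (h : l₁ ++ a :: r₁ = l₂ ++ b :: r₂) :
    (l₁ = l₂ ∧ a = b ∧ r₁ = r₂) ∨ (∃ m, l₂ = l₁ ++ a :: m ∧ r₁ = m ++ b :: r₂) ∨
      (∃ m, l₁ = l₂ ++ b :: m ∧ r₂ = m ++ a :: r₁) := by
  rcases List.append_eq_append_iff.1 h with ⟨m, rfl, hm⟩ | ⟨m, rfl, hm⟩
  · rcases List.cons_eq_append_iff.1 hm with ⟨rfl, hm⟩ | ⟨m, rfl, rfl⟩
    · simp_all
    · exact .inr (.inl ⟨m, rfl, rfl⟩)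
  · rcases List.cons_eq_append_iff.1 hm with ⟨rfl, hm⟩ | ⟨m, rfl, rfl⟩
    · simp_all
    · exact .inr (.inr ⟨m, rfl, rfl⟩)

theorem Set.Countable.exists_leftInvOn_nat {α : Type*} [Nonempty α] {S : Set α}
    (hS : S.Countable) : ∃ (enc : α → ℕ) (dec : ℕ → α), Set.LeftInvOn dec enc S := by
  obtain ⟨enc, h⟩ := Set.countable_iff_exists_injOn.1 hS
  exact ⟨enc, Function.invFunOn enc S, h.leftInvOn_invFunOn⟩

namespace Tm

variable {F : Type}

open Relation

@[elab_as_elim, induction_eliminator]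
theorem ind {motive : Tm F → Prop} (var : ∀ n, motive (.var n))
    (lam : ∀ t, motive t → motive (.lam t))
    (app : ∀ t u, motive t → motive u → motive (.app t u))
    (sym : ∀ f ts, (∀ t ∈ ts, motive t) → motive (.sym f ts)) : ∀ t, motive t
  | .var n => var n
  | .lam t => lam t (ind var lam app sym t)
  | .app t u => app t u (ind var lam app sym t) (ind var lam app sym u)
  | .sym f ts => sym f ts fun t _ => ind var lam app sym t
termination_by t => sizeOf t
decreasing_by
  all_goals simp_wf
  all_goals first | omega | (have := List.sizeOf_lt_of_mem ‹_›; omega)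

@[simp] theorem rename_var (ρ : ℕ → ℕ) (n : ℕ) : rename ρ (.var n : Tm F) = .var (ρ n) := by
  rw [rename]

@[simp] theorem rename_lam (ρ : ℕ → ℕ) (t : Tm F) :
    rename ρ (.lam t) = .lam (rename (fun n => Nat.casesOn n 0 (fun m => ρ m + 1)) t) := by
  rw [rename]

@[simp] theorem rename_app (ρ : ℕ → ℕ) (t u : Tm F) :
    rename ρ (.app t u) = .app (rename ρ t) (rename ρ u) := by
  rw [rename]

@[simp] theorem rename_sym (ρ : ℕ → ℕ) (f : F) (ts : List (Tm F)) :
    rename ρ (.sym f ts) = .sym f (ts.map (rename ρ)) := by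
  rw [rename, List.attach_map_val]

@[simp] theorem subst_var (σ : ℕ → Tm F) (n : ℕ) : subst σ (.var n) = σ n := by
  rw [subst]

@[simp] theorem subst_lam (σ : ℕ → Tm F) (t : Tm F) :
    subst σ (.lam t) = .lam (subst (up σ) t) := by
  rw [subst]

@[simp] theorem subst_app (σ : ℕ → Tm F) (t u : Tm F) :
    subst σ (.app t u) = .app (subst σ t) (subst σ u) := by
  rw [subst]

@[simp] theorem subst_sym (σ : ℕ → Tm F) (f : F) (ts : List (Tm F)) :
    subst σ (.sym f ts) = .sym f (ts.map (subst σ)) := by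
  rw [subst, List.attach_map_val]

theorem subst_congr_of_fvar {σ σ' : ℕ → Tm F} (t : Tm F) (h : ∀ n, FVar n t → σ n = σ' n) :
    subst σ t = subst σ' t := by
  induction t generalizing σ σ' with
  | var n => simpa using h n (.var n)
  | lam t ih =>
    simp only [subst_lam, lam.injEq]
    refine ih fun n hn => ?_
    cases n with
    | zero => rfl
    | succ m => exact congrArg (rename Nat.succ) (h m (.lam hn))
  | app t u iht ihu =>
    simp only [subst_app, app.injEq]
    exact ⟨iht fun n hn => h n (.appL hn), ihu fun n hn => h n (.appR hn)⟩
  | sym f ts ih =>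
    simp only [subst_sym, sym.injEq, true_and]
    exact List.map_congr_left fun a ha => ih a ha fun n hn => h n (.sym ha hn)

theorem subst_congr {σ σ' : ℕ → Tm F} (t : Tm F) (h : ∀ n, σ n = σ' n) :
    subst σ t = subst σ' t :=
  subst_congr_of_fvar t fun n _ => h n

@[simp] theorem subst_var_eq_self (t : Tm F) : subst Tm.var t = t := by
  induction t with
  | var n => simp
  | lam t ih =>
    simp only [subst_lam, lam.injEq]
    rwa [subst_congr (σ' := Tm.var) t fun n => by cases n <;> simp [up]]
  | app t u iht ihu => simp [iht, ihu]
  | sym f ts ih => simpa using List.map_congr_left ih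

theorem rename_eq_subst (ρ : ℕ → ℕ) (t : Tm F) : rename ρ t = subst (fun n => .var (ρ n)) t := by
  induction t generalizing ρ with
  | var n => simp
  | lam t ih =>
    simp only [rename_lam, subst_lam, ih]
    exact congrArg lam <| subst_congr t fun n => by cases n <;> simp [up]
  | app t u iht ihu => simp [iht, ihu]
  | sym f ts ih => simpa using List.map_congr_left fun a ha => ih a ha ρ

theorem subst_rename (σ : ℕ → Tm F) (ρ : ℕ → ℕ) (t : Tm F) :
    subst σ (rename ρ t) = subst (fun n => σ (ρ n)) t := by
  induction t generalizing σ ρ with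
  | var n => simp
  | lam t ih =>
    simp only [rename_lam, subst_lam, ih]
    exact congrArg lam <| subst_congr t fun n => by cases n <;> rfl
  | app t u iht ihu => simp [iht, ihu]
  | sym f ts ih => simpa using List.map_congr_left fun a ha => ih a ha σ ρ

theorem rename_subst (ρ : ℕ → ℕ) (σ : ℕ → Tm F) (t : Tm F) :
    rename ρ (subst σ t) = subst (fun n => rename ρ (σ n)) t := by
  induction t generalizing ρ σ with
  | var n => simp
  | lam t ih =>
    simp only [subst_lam, rename_lam, ih]
    refine congrArg lam (subst_congr t fun n => ?_)
    cases n with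
    | zero => simp [up]
    | succ m =>
      change rename _ (rename Nat.succ (σ m)) = rename Nat.succ (rename ρ (σ m))
      simp only [rename_eq_subst _ (rename _ _), subst_rename]
  | app t u iht ihu => simp [iht, ihu]
  | sym f ts ih => simpa using List.map_congr_left fun a ha => ih a ha ρ σ

theorem subst_subst (σ θ : ℕ → Tm F) (t : Tm F) :
    subst σ (subst θ t) = subst (fun n => subst σ (θ n)) t := by
  induction t generalizing σ θ with
  | var n => simp
  | lam t ih =>
    simp only [subst_lam, ih]
    refine congrArg lam (subst_congr t fun n => ?_)
    cases n with
    | zero => simp [up]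
    | succ m => simp only [up, subst_rename, rename_subst]
  | app t u iht ihu => simp [iht, ihu]
  | sym f ts ih => simpa using List.map_congr_left fun a ha => ih a ha σ θ

def SubstClosed (r : Tm F → Tm F → Prop) : Prop :=
  ∀ (σ : ℕ → Tm F) {t u}, r t u → r (subst σ t) (subst σ u)

theorem SubstClosed.rename {r : Tm F → Tm F → Prop} (hr : SubstClosed r) (ρ : ℕ → ℕ)
    {t u : Tm F} (h : r t u) : r (rename ρ t) (rename ρ u) := by
  simpa only [rename_eq_subst] using hr _ h

theorem SubstClosed.sup {r s : Tm F → Tm F → Prop} (hr : SubstClosed r) (hs : SubstClosed s) :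
    SubstClosed (r ⊔ s) :=
  fun σ _ _ h => h.imp (hr σ) (hs σ)

theorem SubstClosed.reflTransGen {r : Tm F → Tm F → Prop} (hr : SubstClosed r) :
    SubstClosed (ReflTransGen r) :=
  fun σ _ _ h => h.lift (subst σ) fun _ _ => hr σ

theorem substClosed_rBase (Rules : Set (Tm F × Tm F)) : SubstClosed (RBase Rules) := by
  rintro σ _ _ ⟨p, hp, θ, rfl, rfl⟩
  exact ⟨p, hp, fun n => subst σ (θ n), subst_subst _ _ _, subst_subst _ _ _⟩

theorem substClosed_betaBase : SubstClosed (BetaBase (F := F)) := by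
  rintro σ _ _ ⟨a, b, rfl, rfl⟩
  refine ⟨subst (up σ) a, subst σ b, by simp, ?_⟩
  simp only [subst_subst]
  refine subst_congr a fun n => ?_
  cases n with
  | zero => simp [up, beta0]
  | succ m => simp [up, beta0, subst_rename]

theorem substClosed_rBase_sup_betaBase {Rules : Set (Tm F × Tm F)} :
    SubstClosed (RBase Rules ⊔ BetaBase) :=
  (substClosed_rBase Rules).sup substClosed_betaBase

namespace Ctx

variable {base : Tm F → Tm F → Prop}

theorem mono {base' : Tm F → Tm F → Prop} (h : base ≤ base') {t u : Tm F}
    (hc : Ctx base t u) : Ctx base' t u := by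
  induction hc with
  | base hb => exact .base (h _ _ hb)
  | lam _ ih => exact .lam ih
  | appL _ ih => exact .appL ih
  | appR _ ih => exact .appR ih
  | sym _ ih => exact .sym ih

theorem sup_iff {r s : Tm F → Tm F → Prop} {t u : Tm F} :
    Ctx (r ⊔ s) t u ↔ Ctx r t u ∨ Ctx s t u := by
  refine ⟨fun h => ?_, fun h => h.elim (mono le_sup_left) (mono le_sup_right)⟩
  induction h with
  | base hb => exact hb.imp .base .base
  | lam _ ih => exact ih.imp .lam .lam
  | appL _ ih => exact ih.imp .appL .appL
  | appR _ ih => exact ih.imp .appR .appR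
  | sym _ ih => exact ih.imp .sym .sym

theorem substClosed (hb : SubstClosed base) : SubstClosed (Ctx base) := by
  intro σ t u h
  induction h generalizing σ with
  | base h => exact .base (hb σ h)
  | lam _ ih => simpa only [subst_lam] using Ctx.lam (ih _)
  | appL _ ih => simpa only [subst_app] using Ctx.appL (ih σ)
  | appR _ ih => simpa only [subst_app] using Ctx.appR (ih σ)
  | sym _ ih =>
    simp only [subst_sym, List.map_append, List.map_cons]
    exact .sym (ih σ)

theorem reflTransGen_lam {t t' : Tm F} (h : ReflTransGen (Ctx base) t t') :
    ReflTransGen (Ctx base) (.lam t) (.lam t') :=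
  h.lift _ fun _ _ => Ctx.lam

theorem reflTransGen_app {t t' u u' : Tm F} (ht : ReflTransGen (Ctx base) t t')
    (hu : ReflTransGen (Ctx base) u u') :
    ReflTransGen (Ctx base) (.app t u) (.app t' u') :=
  (ht.lift (fun x => Tm.app x u) fun _ _ => Ctx.appL).trans
    (hu.lift (fun x => Tm.app t' x) fun _ _ => Ctx.appR)

theorem reflTransGen_sym_of_forall₂ {f : F} {ts ts' : List (Tm F)}
    (h : List.Forall₂ (ReflTransGen (Ctx base)) ts ts') :
    ReflTransGen (Ctx base) (.sym f ts) (.sym f ts') := by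
  suffices ∀ l, ReflTransGen (Ctx base) (.sym f (l ++ ts)) (.sym f (l ++ ts')) from this []
  induction h with
  | nil => exact fun _ => .refl
  | @cons a a' ts ts' ha _ ih =>
    intro l
    refine .trans (ha.lift (fun x => Tm.sym f (l ++ x :: ts)) fun _ _ => Ctx.sym) ?_
    simpa using ih (l ++ [a'])

theorem reflTransGen_subst (hb : SubstClosed base) {σ σ' : ℕ → Tm F}
    (h : ∀ n, ReflTransGen (Ctx base) (σ n) (σ' n)) (t : Tm F) :
    ReflTransGen (Ctx base) (subst σ t) (subst σ' t) := by
  induction t generalizing σ σ' with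
  | var n => simpa using h n
  | lam t ih =>
    rw [subst_lam, subst_lam]
    refine reflTransGen_lam (ih fun n => ?_)
    cases n with
    | zero => exact .refl
    | succ m => exact (substClosed hb).reflTransGen.rename Nat.succ (h m)
  | app t u iht ihu => simpa only [subst_app] using reflTransGen_app (iht h) (ihu h)
  | sym f ts ih =>
    rw [subst_sym, subst_sym]
    refine reflTransGen_sym_of_forall₂ ?_
    simpa [List.forall₂_map_left_iff, List.forall₂_map_right_iff, List.forall₂_same]
      using fun a ha => ih a ha h

theorem join_sym_of_disjoint {f : F} {l m r : List (Tm F)} {s₁ s₁' s₂ s₂' : Tm F}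
    (h₁ : Ctx base s₁ s₁') (h₂ : Ctx base s₂ s₂') :
    Join (ReflTransGen (Ctx base)) (.sym f (l ++ s₁' :: (m ++ s₂ :: r)))
      (.sym f (l ++ s₁ :: (m ++ s₂' :: r))) := by
  refine ⟨.sym f (l ++ s₁' :: (m ++ s₂' :: r)), .single ?_, .single (.sym h₁)⟩
  simpa using Ctx.sym (f := f) (l := l ++ s₁' :: m) (r := r) h₂

theorem join_of_root
    (hroot : ∀ {t u v}, base t u → Ctx base t v → Join (ReflTransGen (Ctx base)) u v)
    {t u v : Tm F} (h₁ : Ctx base t u) (h₂ : Ctx base t v) :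
    Join (ReflTransGen (Ctx base)) u v := by
  induction h₁ generalizing v with
  | base hb => exact hroot hb h₂
  | lam h₁ ih =>
    cases h₂ with
    | base hb => exact symm (hroot hb (.lam h₁))
    | lam h₂ =>
      obtain ⟨w, hu, hv⟩ := ih h₂
      exact ⟨.lam w, reflTransGen_lam hu, reflTransGen_lam hv⟩
  | appL h₁ ih =>
    cases h₂ with
    | base hb => exact symm (hroot hb (.appL h₁))
    | appL h₂ =>
      obtain ⟨w, hu, hv⟩ := ih h₂
      exact ⟨.app w _, reflTransGen_app hu .refl, reflTransGen_app hv .refl⟩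
    | appR h₂ => exact ⟨_, .single (.appR h₂), .single (.appL h₁)⟩
  | appR h₁ ih =>
    cases h₂ with
    | base hb => exact symm (hroot hb (.appR h₁))
    | appR h₂ =>
      obtain ⟨w, hu, hv⟩ := ih h₂
      exact ⟨.app _ w, reflTransGen_app .refl hu, reflTransGen_app .refl hv⟩
    | appL h₂ => exact ⟨_, .single (.appL h₂), .single (.appR h₁)⟩
  | @sym f l r s s' h₁ ih =>
    generalize ht : Tm.sym f (l ++ s :: r) = t at h₂
    cases h₂ with
    | base hb => subst ht; exact symm (hroot hb (.sym h₁))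
    | lam _ | appL _ | appR _ => cases ht
    | sym h₂ =>
      injection ht with hf hl
      subst hf
      rcases List.append_cons_eq_append_cons hl with ⟨rfl, rfl, rfl⟩ | ⟨m, rfl, rfl⟩ |
        ⟨m, rfl, rfl⟩
      · obtain ⟨w, hu, hv⟩ := ih h₂
        exact ⟨.sym f (l ++ w :: r), hu.lift _ fun _ _ => Ctx.sym,
          hv.lift _ fun _ _ => Ctx.sym⟩
      · simpa using join_sym_of_disjoint h₁ h₂
      · simpa using symm (join_sym_of_disjoint h₂ h₁)

end Ctx

inductive Subterm : Tm F → Tm F → Prop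
  | refl (t : Tm F) : Subterm t t
  | lam {s t : Tm F} : Subterm s t → Subterm s (.lam t)
  | appL {s t u : Tm F} : Subterm s t → Subterm s (.app t u)
  | appR {s t u : Tm F} : Subterm s u → Subterm s (.app t u)
  | sym {s t : Tm F} {f : F} {ts : List (Tm F)} : t ∈ ts → Subterm s t → Subterm s (.sym f ts)

theorem Subterm.trans {a b c : Tm F} (h₁ : Subterm a b) (h₂ : Subterm b c) : Subterm a c := by
  induction h₂ with
  | refl => exact h₁
  | lam _ ih => exact .lam ih
  | appL _ ih => exact .appL ih
  | appR _ ih => exact .appR ih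
  | sym hm _ ih => exact .sym hm ih

theorem finite_setOf_subterm (t : Tm F) : {s | Subterm s t}.Finite := by
  induction t with
  | var n => exact (Set.finite_singleton _).subset fun s hs => by cases hs; rfl
  | lam t ih =>
    refine (ih.insert (.lam t)).subset fun s hs => ?_
    cases hs with
    | refl => exact .inl rfl
    | lam hs => exact .inr hs
  | app t u iht ihu =>
    refine ((iht.union ihu).insert (.app t u)).subset fun s hs => ?_
    cases hs with
    | refl => exact .inl rfl
    | appL hs => exact .inr (.inl hs)
    | appR hs => exact .inr (.inr hs)
  | sym f ts ih =>
    refine ((ts.finite_toSet.biUnion ih).insert (.sym f ts)).subset fun s hs => ?_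
    cases hs with
    | refl => exact .inl rfl
    | sym hm hs => exact .inr (Set.mem_biUnion hm hs)

theorem subterm_subst_of_fvar {σ : ℕ → Tm F} {n : ℕ} {l : Tm F} (hl : Alg l) (h : FVar n l) :
    Subterm (σ n) (subst σ l) := by
  induction hl with
  | var m => cases h; simpa using Subterm.refl _
  | sym f ts _ ih =>
    cases h with
    | sym hm h => simpa using Subterm.sym (List.mem_map_of_mem hm) (ih _ hm h)

def cap (enc : Tm F → ℕ) : Tm F → Tm F
  | .var n => .var (enc (.var n))
  | .lam t => .var (enc (.lam t))
  | .app t u => .var (enc (.app t u))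
  | .sym f ts => .sym f (ts.attach.map fun x => cap enc x.1)
termination_by t => sizeOf t
decreasing_by
  all_goals simp_wf
  have := List.sizeOf_lt_of_mem x.2
  omega

section Cap

variable (enc : Tm F → ℕ)

@[simp] theorem cap_var (n : ℕ) : cap enc (.var n : Tm F) = .var (enc (.var n)) := by
  rw [cap]

@[simp] theorem cap_lam (t : Tm F) : cap enc (.lam t) = .var (enc (.lam t)) := by
  rw [cap]

@[simp] theorem cap_app (t u : Tm F) : cap enc (.app t u) = .var (enc (.app t u)) := by
  rw [cap]

@[simp] theorem cap_sym (f : F) (ts : List (Tm F)) :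
    cap enc (.sym f ts) = .sym f (ts.map (cap enc)) := by
  rw [cap, List.attach_map_val]

theorem alg_cap (t : Tm F) : Alg (cap enc t) := by
  induction t with
  | var n => simpa using Alg.var _
  | lam t _ => simpa using Alg.var _
  | app t u _ _ => simpa using Alg.var _
  | sym f ts ih => simpa using Alg.sym _ _ (by simpa using ih)

theorem cap_subst_of_alg {l : Tm F} (hl : Alg l) (σ : ℕ → Tm F) :
    cap enc (subst σ l) = subst (fun n => cap enc (σ n)) l := by
  induction hl with
  | var n => simp
  | sym f ts _ ih => simpa using List.map_congr_left ih

variable {enc} {dec : ℕ → Tm F}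

theorem subst_cap_eq_self {t : Tm F} (h : Set.LeftInvOn dec enc {s | Subterm s t}) :
    subst dec (cap enc t) = t := by
  induction t with
  | var n => simpa using h (Subterm.refl _)
  | lam t _ => simpa using h (Subterm.refl _)
  | app t u _ _ => simpa using h (Subterm.refl _)
  | sym f ts ih =>
    simp only [cap_sym, subst_sym, List.map_map, sym.injEq, true_and]
    refine (List.map_congr_left fun a ha => ?_).trans (List.map_id ts)
    exact ih a ha (h.mono fun s hs => hs.trans (.sym ha (.refl a)))

end Cap

inductive CapCtx (base : Tm F → Tm F → Prop) : Tm F → Tm F → Prop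
  | base {f : F} {ts : List (Tm F)} {v : Tm F} : base (.sym f ts) v → CapCtx base (.sym f ts) v
  | sym {f : F} {l r : List (Tm F)} {t t' : Tm F} :
      CapCtx base t t' → CapCtx base (.sym f (l ++ t :: r)) (.sym f (l ++ t' :: r))

theorem Ctx.exists_reflTransGen_subst_or_capCtx {base : Tm F → Tm F → Prop} (hb : SubstClosed base)
    {l : Tm F} (hl : Alg l) {σ : ℕ → Tm F} {v : Tm F} (h : Ctx base (subst σ l) v) :
    (∃ σ' : ℕ → Tm F, (∀ n, ReflTransGen (Ctx base) (σ n) (σ' n)) ∧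
      ReflTransGen (Ctx base) v (subst σ' l)) ∨ CapCtx base (subst σ l) v := by
  classical
  induction hl generalizing v with
  | var n =>
    rw [subst_var] at h ⊢
    refine .inl ⟨Function.update σ n v, fun m => ?_, by simpa using .refl⟩
    rcases eq_or_ne m n with rfl | hm
    · simpa using .single h
    · rw [Function.update_of_ne hm]
  | sym f ls _ ih =>
    simp only [subst_sym] at h ⊢
    generalize ht : Tm.sym f (ls.map (subst σ)) = t at h
    cases h with
    | base h => subst ht; exact .inr (.base h)
    | lam _ | appL _ | appR _ => cases ht
    | @sym _ L R s s' hs =>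
      injection ht with hf hL
      subst hf
      obtain ⟨ls₁, _, rfl, rfl, hR⟩ := List.map_eq_append_iff.1 hL
      obtain ⟨a, ls₂, rfl, rfl, rfl⟩ := List.map_eq_cons_iff.1 hR
      rcases ih a (by simp) hs with ⟨σ', hσ, hs'⟩ | hcap
      · have hmap : ∀ ts : List (Tm F),
            List.Forall₂ (ReflTransGen (Ctx base)) (ts.map (subst σ)) (ts.map (subst σ')) :=
          fun ts => by
            simpa [List.forall₂_map_left_iff, List.forall₂_map_right_iff, List.forall₂_same]
              using fun b _ => Ctx.reflTransGen_subst hb hσ b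
        refine .inl ⟨σ', hσ, Ctx.reflTransGen_sym_of_forall₂ ?_⟩
        simpa using List.rel_append (hmap ls₁) (.cons hs' (hmap ls₂))
      · exact .inr (.sym hcap)

theorem Alg.exists_sym_eq {l : Tm F} (hl : Alg l) (hnv : ∀ n, l ≠ .var n) :
    ∃ f ts, l = .sym f ts := by
  cases hl with
  | var n => exact absurd rfl (hnv n)
  | sym f ts _ => exact ⟨f, ts, rfl⟩

variable {Rules : Set (Tm F × Tm F)}

theorem RBase.exists_sym_eq (hlhs : ∀ p ∈ Rules, ∃ f ts, p.1 = .sym f ts) {t v : Tm F}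
    (h : RBase Rules t v) : ∃ f ts, t = .sym f ts := by
  obtain ⟨p, hp, σ, rfl, -⟩ := h
  obtain ⟨f, ts, hf⟩ := hlhs p hp
  exact ⟨f, ts.map (subst σ), by simp [hf]⟩

section Lift

variable (hlhs : ∀ p ∈ Rules, Alg p.1) (hfv : ∀ p ∈ Rules, ∀ n, FVar n p.2 → FVar n p.1)
  {enc : Tm F → ℕ} {dec : ℕ → Tm F}

include hlhs hfv

theorem RBase.exists_cap {t v : Tm F} (h : RBase Rules t v)
    (hdec : Set.LeftInvOn dec enc {s | Subterm s t}) :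
    ∃ v₀, RBase Rules (cap enc t) v₀ ∧ subst dec v₀ = v := by
  obtain ⟨p, hp, σ, rfl, rfl⟩ := h
  refine ⟨subst (fun n => cap enc (σ n)) p.2,
    ⟨p, hp, _, cap_subst_of_alg enc (hlhs p hp) σ, rfl⟩, ?_⟩
  rw [subst_subst]
  refine subst_congr_of_fvar p.2 fun n hn => subst_cap_eq_self (hdec.mono fun s hs => ?_)
  exact hs.trans (subterm_subst_of_fvar (hlhs p hp) (hfv p hp n hn))

theorem CapCtx.exists_cap {t v : Tm F} (h : CapCtx (RBase Rules ⊔ BetaBase) t v)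
    (hdec : Set.LeftInvOn dec enc {s | Subterm s t}) :
    ∃ v₀, Ctx (RBase Rules) (cap enc t) v₀ ∧ subst dec v₀ = v := by
  induction h with
  | base h =>
    rcases h with hR | ⟨_, _, hβ, -⟩
    · obtain ⟨v₀, hcap, rfl⟩ := RBase.exists_cap hlhs hfv hR hdec
      exact ⟨v₀, .base hcap, rfl⟩
    · cases hβ
  | @sym f L R s s' _ ih =>
    have hsub : ∀ x ∈ L ++ s :: R, Set.LeftInvOn dec enc {y | Subterm y x} :=
      fun x hx => hdec.mono fun y hy => hy.trans (.sym hx (.refl x))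
    obtain ⟨v₀, hstep, rfl⟩ := ih (hsub s (by simp))
    refine ⟨.sym f (L.map (cap enc) ++ v₀ :: R.map (cap enc)), by simpa using Ctx.sym hstep, ?_⟩
    have hL : L.map (subst dec ∘ cap enc) = L :=
      (List.map_congr_left fun x hx => subst_cap_eq_self (hsub x (by simp [hx]))).trans
        (List.map_id L)
    have hR : R.map (subst dec ∘ cap enc) = R :=
      (List.map_congr_left fun x hx => subst_cap_eq_self (hsub x (by simp [hx]))).trans
        (List.map_id R)
    simp [hL, hR]

end Lift

theorem join_of_rBase (hlhs : ∀ p ∈ Rules, Alg p.1)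
    (hfv : ∀ p ∈ Rules, ∀ n, FVar n p.2 → FVar n p.1)
    (hlcR : ∀ t u v : Tm F, Alg t → Ctx (RBase Rules) t u → Ctx (RBase Rules) t v →
      Join (ReflTransGen (Ctx (RBase Rules))) u v)
    {t u v : Tm F} (h₁ : RBase Rules t u) (h₂ : Ctx (RBase Rules ⊔ BetaBase) t v) :
    Join (ReflTransGen (Ctx (RBase Rules ⊔ BetaBase))) u v := by
  obtain ⟨p, hp, σ, rfl, hu⟩ := id h₁
  rcases Ctx.exists_reflTransGen_subst_or_capCtx substClosed_rBase_sup_betaBase (hlhs p hp) h₂ with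
    ⟨σ', hσ, hv⟩ | hcap
  · exact ⟨subst σ' p.2, hu ▸ Ctx.reflTransGen_subst substClosed_rBase_sup_betaBase hσ p.2,
      hv.tail (.base (.inl ⟨p, hp, σ', rfl, rfl⟩))⟩
  · have : Nonempty (Tm F) := ⟨.var 0⟩
    obtain ⟨enc, dec, hdec⟩ :=
      (finite_setOf_subterm (subst σ p.1)).countable.exists_leftInvOn_nat
    obtain ⟨u₀, hu₀, rfl⟩ := RBase.exists_cap hlhs hfv h₁ hdec
    obtain ⟨v₀, hv₀, rfl⟩ := CapCtx.exists_cap hlhs hfv hcap hdec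
    obtain ⟨w, hu, hv⟩ := hlcR _ _ _ (alg_cap enc _) (.base hu₀) hv₀
    have hdecode : ∀ {a b}, ReflTransGen (Ctx (RBase Rules)) a b →
        ReflTransGen (Ctx (RBase Rules ⊔ BetaBase)) (subst dec a) (subst dec b) := fun h =>
      ReflTransGen.mono (fun _ _ => Ctx.mono le_sup_left) _ _
        ((Ctx.substClosed (substClosed_rBase Rules)).reflTransGen dec h)
    exact ⟨subst dec w, hdecode hu, hdecode hv⟩

theorem join_of_betaBase (hlhs : ∀ p ∈ Rules, ∃ f ts, p.1 = .sym f ts)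
    {t u v : Tm F} (h₁ : BetaBase t u) (h₂ : Ctx (RBase Rules ⊔ BetaBase) t v) :
    Join (ReflTransGen (Ctx (RBase Rules ⊔ BetaBase))) u v := by
  obtain ⟨a, b, rfl, rfl⟩ := h₁
  cases h₂ with
  | base h =>
    rcases h with hR | ⟨_, _, h, rfl⟩
    · obtain ⟨f, ts, h⟩ := hR.exists_sym_eq hlhs
      cases h
    · cases h
      exact ⟨_, .refl, .refl⟩
  | appL h =>
    cases h with
    | base h =>
      rcases h with hR | ⟨_, _, h, -⟩
      · obtain ⟨f, ts, h⟩ := hR.exists_sym_eq hlhs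
        cases h
      · cases h
    | lam h =>
      exact ⟨_, .single (Ctx.substClosed substClosed_rBase_sup_betaBase _ h),
        .single (.base (.inr ⟨_, b, rfl, rfl⟩))⟩
  | appR h =>
    refine ⟨_, Ctx.reflTransGen_subst substClosed_rBase_sup_betaBase (fun n => ?_) a,
      .single (.base (.inr ⟨a, _, rfl, rfl⟩))⟩
    cases n with
    | zero => exact .single h
    | succ m => exact .refl

end Tm

open Tm in
/-- If the rewrite relation →_R is generated from rules whose left-hand sides are
non-variable algebraic terms (with FV(r) ⊆ FV(l)), and →_R is locally confluent
on algebraic terms, then →_R ∪ →_β is locally confluent on all terms. -/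
theorem local_confluence_R_beta {F : Type} (Rules : Set (Tm F × Tm F))
    (hrules : ∀ p ∈ Rules, Alg p.1 ∧ (∀ n, p.1 ≠ Tm.var n) ∧
      (∀ n, FVar n p.2 → FVar n p.1))
    (hlcR : ∀ t u v : Tm F, Alg t → Ctx (RBase Rules) t u → Ctx (RBase Rules) t v →
      ∃ w, Relation.ReflTransGen (Ctx (RBase Rules)) u w ∧
           Relation.ReflTransGen (Ctx (RBase Rules)) v w) :
    ∀ t u v : Tm F,
      (Ctx (RBase Rules) t u ∨ Ctx BetaBase t u) →
      (Ctx (RBase Rules) t v ∨ Ctx BetaBase t v) →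
      ∃ w, Relation.ReflTransGen (fun a b => Ctx (RBase Rules) a b ∨ Ctx BetaBase a b) u w ∧
           Relation.ReflTransGen (fun a b => Ctx (RBase Rules) a b ∨ Ctx BetaBase a b) v w := by
  have hlhs : ∀ p ∈ Rules, ∃ f ts, p.1 = .sym f ts :=
    fun p hp => (hrules p hp).1.exists_sym_eq (hrules p hp).2.1
  intro t u v h₁ h₂
  obtain ⟨w, hu, hv⟩ := Ctx.join_of_root
    (fun h₁ h₂ => h₁.elim
      (join_of_rBase (fun p hp => (hrules p hp).1) (fun p hp => (hrules p hp).2.2) hlcR · h₂)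
      (join_of_betaBase hlhs · h₂))
    (Ctx.sup_iff.2 h₁) (Ctx.sup_iff.2 h₂)
  exact ⟨w, .mono (fun _ _ => Ctx.sup_iff.1) _ _ hu, .mono (fun _ _ => Ctx.sup_iff.1) _ _ hv⟩
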